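/- arXiv:2510.23082 — 6 statements merged into one kernel-verified Lean document; each statement's English description precedes it below -/
import Mathlib

section
/- If X : ℝ → Matrix is a solution of the matrix ODE X'(t) = G(t) * X(t) with G being T-periodic (G(t+T) = G(t) for all t), and X(T) is invertible, then Y(t) := X(t+T) * (X(T))⁻¹ * X(0) also solves Y'(t) = G(t) * Y(t) with Y(0) = X(0); hence by uniqueness of solutions of linear ODEs, X(t+T) * (X(T))⁻¹ * X(0) = X(t) for all t. -/
open Set

theorem Matrix.hasDerivAt_iff {m n : Type*} [Fintype m] [Fintype n]
    {f : ℝ → Matrix m n ℝ} {f' : Matrix m n ℝ} {t : ℝ} :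
    HasDerivAt f f' t ↔ ∀ i j, HasDerivAt (fun s => f s i j) (f' i j) t :=
  (hasDerivAt_pi (φ := fun s => (f s : m → n → ℝ))).trans
    (forall_congr' fun _ => hasDerivAt_pi)

theorem ODE_linear_solution_unique {E : Type*} [NormedAddCommGroup E] [NormedSpace ℝ E]
    {A : ℝ → E →L[ℝ] E} (hA : Continuous A) {f g : ℝ → E}
    (hf : ∀ t, HasDerivAt f (A t (f t)) t) (hg : ∀ t, HasDerivAt g (A t (g t)) t)
    {t₀ : ℝ} (heq : f t₀ = g t₀) : f = g := by
  ext t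
  obtain ⟨a, b, ht, ht₀⟩ : ∃ a b, t ∈ Ioo a b ∧ t₀ ∈ Ioo a b := by
    use min (-|t|) (-|t₀|) - 1, max |t| |t₀| + 1
    grind
  obtain ⟨C, hC⟩ := isCompact_Icc.exists_bound_of_continuousOn (hA.continuousOn (s := Icc a b))
  have hlip (s : ℝ) (hs : s ∈ Ioo a b) : LipschitzOnWith C.toNNReal (A s) univ :=
    ((A s).lipschitz.weaken
      (NNReal.le_toNNReal_of_coe_le (hC s (Ioo_subset_Icc_self hs)))).lipschitzOnWith
  exact ODE_solution_unique_of_mem_Ioo hlip ht₀ (fun s _ => ⟨hf s, trivial⟩)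
    (fun s _ => ⟨hg s, trivial⟩) heq ht

section NormedAlgebra

variable {𝔸 : Type*} [NormedRing 𝔸] [NormedAlgebra ℝ 𝔸] {G f g : ℝ → 𝔸}

theorem eq_of_hasDerivAt_mul_left (hG : Continuous G) (hf : ∀ t, HasDerivAt f (G t * f t) t)
    (hg : ∀ t, HasDerivAt g (G t * g t) t) {t₀ : ℝ} (heq : f t₀ = g t₀) : f = g :=
  ODE_linear_solution_unique ((ContinuousLinearMap.mul ℝ 𝔸).continuous.comp hG) hf hg heq

theorem Function.Periodic.hasDerivAt_comp_add_period_mul_const {T : ℝ} (hG : G.Periodic T)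
    (hf : ∀ t, HasDerivAt f (G t * f t) t) (c : 𝔸) (t : ℝ) :
    HasDerivAt (fun s => f (s + T) * c) (G t * (f (t + T) * c)) t := by
  simpa only [hG t, mul_assoc] using ((hf (t + T)).comp_add_const t T).mul_const c

end NormedAlgebra

theorem stmt_0_general {n : ℕ} (T : ℝ)
    (G X : ℝ → Matrix (Fin n) (Fin n) ℝ)
    (hGcont : ∀ i j, Continuous fun t => G t i j)
    (hGper : ∀ t, G (t + T) = G t)
    (hX : ∀ t (i j : Fin n), HasDerivAt (fun s => X s i j) ((G t * X t) i j) t)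
    (hXT : IsUnit (X T)) :
    (∀ t (i j : Fin n),
        HasDerivAt (fun s => (X (s + T) * (X T)⁻¹ * X 0) i j)
          ((G t * (X (t + T) * (X T)⁻¹ * X 0)) i j) t) ∧
    (X (0 + T) * (X T)⁻¹ * X 0 = X 0) ∧
    (∀ t, X (t + T) * (X T)⁻¹ * X 0 = X t) := by
  have hG : Continuous G := continuous_pi fun i => continuous_pi (hGcont i)
  have hX' (t : ℝ) : HasDerivAt X (G t * X t) t := Matrix.hasDerivAt_iff.2 (hX t)
  -- `HasDerivAt` only depends on the topology of matrices, so any Banach-algebra norm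
  -- may be put on them to apply the lemmas above.
  open scoped Matrix.Norms.Operator in
  have hY (t : ℝ) : HasDerivAt (fun s => X (s + T) * (X T)⁻¹ * X 0)
      (G t * (X (t + T) * (X T)⁻¹ * X 0)) t := by
    simp only [mul_assoc]
    exact Function.Periodic.hasDerivAt_comp_add_period_mul_const hGper hX' ((X T)⁻¹ * X 0) t
  have hY0 : X (0 + T) * (X T)⁻¹ * X 0 = X 0 := by
    rw [zero_add, Matrix.mul_nonsing_inv _ ((Matrix.isUnit_iff_isUnit_det _).1 hXT), one_mul]
  open scoped Matrix.Norms.Operator in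
  have hYX : (fun t => X (t + T) * (X T)⁻¹ * X 0) = X := eq_of_hasDerivAt_mul_left hG hY hX' hY0
  exact ⟨fun t => Matrix.hasDerivAt_iff.1 (hY t), hY0, congrFun hYX⟩

/-- If `X` solves the matrix ODE `X' = G X` with `G` `T`-periodic and `X T` invertible,
then `Y t := X (t+T) * (X T)⁻¹ * X 0` also solves `Y' = G Y` with `Y 0 = X 0`; hence by
uniqueness of solutions of linear ODEs, `X (t+T) * (X T)⁻¹ * X 0 = X t` for all `t`. -/
theorem stmt_0 {n : ℕ} (T : ℝ) (hT : 0 < T)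
    (G X : ℝ → Matrix (Fin n) (Fin n) ℝ)
    (hGcont : ∀ i j, Continuous fun t => G t i j)
    (hGper : ∀ t, G (t + T) = G t)
    (hX : ∀ t (i j : Fin n), HasDerivAt (fun s => X s i j) ((G t * X t) i j) t)
    (hXT : IsUnit (X T)) (hX0 : IsUnit (X 0)) :
    (∀ t (i j : Fin n),
        HasDerivAt (fun s => (X (s + T) * (X T)⁻¹ * X 0) i j)
          ((G t * (X (t + T) * (X T)⁻¹ * X 0)) i j) t) ∧
    (X (0 + T) * (X T)⁻¹ * X 0 = X 0) ∧
    (∀ t, X (t + T) * (X T)⁻¹ * X 0 = X t) :=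
  stmt_0_general T G X hGcont hGper hX hXT
end

section
/- Let U(t) := Φ(t,0) * U₀ * exp(-M t), where Φ(t,0) is the state transition matrix of a T-periodic linear system and Φ(T,0) * U₀ = U₀ * exp(M T). Then U is T-periodic: U(t+T) = U(t) for all t. -/
open NormedSpace

theorem Matrix.exp_smul_mul_exp_neg_add_smul {m 𝕜 : Type*} [Fintype m] [DecidableEq m]
    [RCLike 𝕜] (M : Matrix m m 𝕜) (s t : 𝕜) :
    exp (s • M) * exp (-((t + s) • M)) = exp (-(t • M)) := by
  have hcomm : Commute (s • M) (-((t + s) • M)) :=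
    ((Commute.refl M).smul_right _).neg_right.smul_left _
  rw [← Matrix.exp_add_of_commute _ _ hcomm]
  congr 1
  module

theorem stmt_3_general {n : ℕ} (T : ℝ)
    (Φ : ℝ → Matrix (Fin n) (Fin n) ℂ) (U₀ M : Matrix (Fin n) (Fin n) ℂ)
    (hcocycle : ∀ t, Φ (t + T) = Φ t * Φ T)
    (heig : Φ T * U₀ = U₀ * exp ((T : ℂ) • M)) :
    ∀ t : ℝ, Φ (t + T) * U₀ * exp (-(((t + T) : ℂ) • M))
      = Φ t * U₀ * exp (-((t : ℂ) • M)) := by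
  intro t
  calc Φ (t + T) * U₀ * exp (-(((t + T) : ℂ) • M))
      = Φ t * (Φ T * U₀) * exp (-(((t + T) : ℂ) • M)) := by
        rw [hcocycle, mul_assoc (Φ t)]
    _ = Φ t * U₀ * (exp ((T : ℂ) • M) * exp (-(((t + T) : ℂ) • M))) := by
        rw [heig]; simp only [mul_assoc]
    _ = Φ t * U₀ * exp (-((t : ℂ) • M)) := by
        rw [Matrix.exp_smul_mul_exp_neg_add_smul]

/-- `U t := Φ t * U₀ * exp (-(t • M))` is `T`-periodic, given the cocycle property
`Φ (t+T) = Φ t * Φ T` and the eigen-relation `Φ T * U₀ = U₀ * exp (T • M)`. -/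
theorem stmt_3 {n : ℕ} (T : ℝ) (hT : 0 < T)
    (Φ : ℝ → Matrix (Fin n) (Fin n) ℂ) (U₀ M : Matrix (Fin n) (Fin n) ℂ)
    (hcocycle : ∀ t, Φ (t + T) = Φ t * Φ T)
    (hU₀ : IsUnit U₀)
    (heig : Φ T * U₀ = U₀ * exp ((T : ℂ) • M)) :
    ∀ t : ℝ, Φ (t + T) * U₀ * exp (-(((t + T) : ℂ) • M))
      = Φ t * U₀ * exp (-((t : ℂ) • M)) :=
  stmt_3_general T Φ U₀ M hcocycle heig
end

section
/- Eigenvalues of the block-cyclic product: θ^p together with the stacked vector (u⁽ⁱ⁻ᵈ⁺¹⁾, u⁽ⁱ⁻ᵈ⁺²⁾θ, …, u⁽ⁱ⁾θ^{d−1}) is an eigenpair of the product L⁽ⁱ⁾L⁽ⁱ⁻¹⁾⋯L⁽ⁱ⁻ᵖ⁺¹⁾ whenever (θ, (u⁽ⁱ⁾)) is an eigenpair of the periodic-PEP, where L⁽ⁱ⁾ is the companion-block matrix with identity superdiagonal blocks and bottom row blocks A₀⁽ⁱ⁾, A₁⁽ⁱ⁾, …, A_{d−1}⁽ⁱ⁾.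 -/
/-- Eigenvalues of the block-cyclic product: if `(θ, (u⁽ⁱ⁾))` is an eigenpair of the
periodic-PEP, then `θ^p` together with the stacked vector
`(u⁽ⁱ⁻ᵈ⁺¹⁾, u⁽ⁱ⁻ᵈ⁺²⁾θ, …, u⁽ⁱ⁾θ^{d−1})` is an eigenpair of the product
`L⁽ⁱ⁾ L⁽ⁱ⁻¹⁾ ⋯ L⁽ⁱ⁻ᵖ⁺¹⁾` of block companion matrices. -/
theorem stmt_5 {n p d : ℕ} (hp : 1 ≤ p) (hd : 1 ≤ d)
    (A : ℤ → Fin d → Matrix (Fin n) (Fin n) ℂ)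
    (hAper : ∀ i j, A (i + p) j = A i j)
    (u : ℤ → (Fin n → ℂ))
    (huper : ∀ i, u (i + p) = u i)
    (hunz : ∃ i, u i ≠ 0)
    (θ : ℂ)
    (hPEP : ∀ i : ℤ,
      θ ^ d • u i = ∑ j : Fin d, θ ^ (j : ℕ) • (A i j).mulVec (u (i - d + j)))
    (L : ℤ → Matrix (Fin d × Fin n) (Fin d × Fin n) ℂ)
    (hL : ∀ (i : ℤ) (k l : Fin d) (r s : Fin n),
      L i (k, r) (l, s) =
        if (k : ℕ) = d - 1 then A i l r s
        else if (l : ℕ) = (k : ℕ) + 1 ∧ r = s then 1 else 0) :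
    ∀ i : ℤ,
      (((List.range p).map (fun m => L (i - m))).prod).mulVec
          (fun kr => θ ^ (kr.1 : ℕ) * u (i - d + 1 + kr.1) kr.2)
        = θ ^ p • (fun kr : Fin d × Fin n => θ ^ (kr.1 : ℕ) * u (i - d + 1 + kr.1) kr.2) := by
  intro i
  simp only [List.pure_def, List.bind_eq_flatMap, ← List.map_eq_flatMap, List.map_map]
  set v : ℤ → (Fin d × Fin n → ℂ) :=
    fun j kr => θ ^ (kr.1 : ℕ) * u (j - d + 1 + kr.1) kr.2 with hv
  have key : ∀ j : ℤ, (L j).mulVec (v (j - 1)) = θ • v j := by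
    intro j
    funext kr
    obtain ⟨k, r⟩ := kr
    simp only [Matrix.mulVec, dotProduct, Pi.smul_apply, smul_eq_mul, hv]
    rw [Fintype.sum_prod_type]
    by_cases hk : (k : ℕ) = d - 1
    · have hsum : ∀ l : Fin d, ∑ s, L j (k, r) (l, s) * (θ ^ (l : ℕ) * u (j - 1 - d + 1 + l) s)
          = θ ^ (l : ℕ) * ((A j l).mulVec (u (j - d + l))) r := by
        intro l
        have harg : j - 1 - d + 1 + (l : ℤ) = j - d + l := by ring
        simp only [hL, if_pos hk, Matrix.mulVec, dotProduct, harg,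
          Finset.mul_sum]
        exact Finset.sum_congr rfl fun s _ => by ring
      simp only [hsum]
      have hP := congrFun (hPEP j) r
      simp only [Finset.sum_apply, Pi.smul_apply, smul_eq_mul] at hP
      rw [← hP]
      have hkint : (k : ℤ) = (d : ℤ) - 1 := by omega
      have harg : j - d + 1 + (k : ℤ) = j := by rw [hkint]; ring
      rw [harg, hk]
      rw [show θ * (θ ^ (d - 1) * u j r) = θ ^ (d - 1 + 1) * u j r by ring,
        Nat.sub_add_cancel hd]
    · have hkd : (k : ℕ) + 1 < d := by omega
      set l' : Fin d := ⟨(k : ℕ) + 1, hkd⟩ with hl'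
      rw [Finset.sum_eq_single l']
      · rw [Finset.sum_eq_single r]
        · rw [hL, if_neg hk, if_pos ⟨rfl, rfl⟩]
          have harg : j - 1 - d + 1 + ((k : ℕ) + 1 : ℕ) = j - d + 1 + (k : ℤ) := by
            push_cast; ring
          rw [harg]
          push_cast
          ring
        · intro s _ hs
          simp only [hL, if_neg hk]
          rw [if_neg (by tauto)]
          ring
        · intro h; exact absurd (Finset.mem_univ r) h
      · intro l _ hl
        have : ¬ ((l : ℕ) = (k : ℕ) + 1 ∧ True) := by
          intro ⟨h1, _⟩
          exact hl (Fin.ext h1)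
        apply Finset.sum_eq_zero
        intro s _
        simp only [hL, if_neg hk]
        rw [if_neg (fun ⟨h1, h2⟩ => hl (Fin.ext h1))]
        ring
      · intro h; exact absurd (Finset.mem_univ l') h
  have main : ∀ m : ℕ,
      (((List.range m).map (fun mm : ℕ => L (i - (mm : ℤ)))).prod).mulVec (v (i - m)) = θ ^ m • v i := by
    intro m
    induction m with
    | zero => simp
    | succ m ih =>
      rw [List.range_succ, List.map_append, List.prod_append, List.map_singleton,
        List.prod_singleton, ← Matrix.mulVec_mulVec]
      have harg : (i : ℤ) - (m + 1 : ℕ) = (i - m) - 1 := by push_cast; ring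
      rw [harg, key (i - m), Matrix.mulVec_smul, ih, pow_succ]
      rw [smul_smul, mul_comm]
  have hper : v (i - p) = v i := by
    funext kr
    simp only [hv]
    congr 1
    have := huper (i - p - d + 1 + kr.1)
    rw [show i - p - d + 1 + (kr.1 : ℤ) + p = i - d + 1 + kr.1 by ring] at this
    rw [this]
  have := main p
  rw [hper] at this
  exact this
end

section
/- Coefficient perturbation bound for multistep discretization: with ΔA := (α I − h β_d G₁)⁻¹ (α_j I − h β_j G₂) − α⁻¹ α_j I, if ‖G₁‖, ‖G₂‖ ≤ C_G, 0 < α_min ≤ |α|, |α_j| ≤ α_max, |β_j|, |β_d| ≤ β_max, and h < α_min/(2 β_max C_G), then ‖ΔA‖ ≤ 4 α_min⁻² α_max β_max C_G h. -/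
attribute [local instance] Matrix.linftyOpNormedAddCommGroup Matrix.linftyOpNormedRing
attribute [local instance] Matrix.linftyOpNormedSpace

set_option maxHeartbeats 1000000 in
/-- Coefficient perturbation bound for multistep discretization: with
`ΔA = (α I − h β_d G₁)⁻¹ (α_j I − h β_j G₂) − α⁻¹ α_j I`, under the stated bounds on the
coefficients and `h < α_min/(2 β_max C_G)`, one has
`‖ΔA‖ ≤ 4 α_min⁻² α_max β_max C_G h`. -/
theorem stmt_12 {n : ℕ} (G₁ G₂ : Matrix (Fin n) (Fin n) ℝ)
    (α αj βd βj : ℝ) (αmin αmax βmax CG h : ℝ)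
    (hG₁ : ‖G₁‖ ≤ CG) (hG₂ : ‖G₂‖ ≤ CG)
    (hαmin : 0 < αmin) (hα : αmin ≤ |α|) (hαj : |αj| ≤ αmax) (hα' : |α| ≤ αmax)
    (hβd : |βd| ≤ βmax) (hβj : |βj| ≤ βmax)
    (hh : 0 < h) (hsmall : h < αmin / (2 * βmax * CG)) :
    ‖(α • (1 : Matrix (Fin n) (Fin n) ℝ) - (h * βd) • G₁)⁻¹
        * (αj • (1 : Matrix (Fin n) (Fin n) ℝ) - (h * βj) • G₂)
        - (α⁻¹ * αj) • (1 : Matrix (Fin n) (Fin n) ℝ)‖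
      ≤ 4 * αmin⁻¹ ^ 2 * αmax * βmax * CG * h := by
  have hβ0 : 0 ≤ βmax := le_trans (abs_nonneg _) hβd
  have hCG0 : 0 ≤ CG := le_trans (norm_nonneg _) hG₁
  have hαmax0 : 0 < αmax := lt_of_lt_of_le hαmin (le_trans hα hα')
  have hα0 : α ≠ 0 := fun h0 => by simp [h0] at hα; linarith
  -- positivity of βmax * CG
  have hbc : 0 < βmax * CG := by
    rcases (mul_nonneg hβ0 hCG0).lt_or_eq with h' | h'
    · exact h'
    · exfalso
      have h2 : 2 * βmax * CG = 0 := by rw [mul_assoc, ← h', mul_zero]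
      rw [h2, div_zero] at hsmall; linarith
  rcases Nat.eq_zero_or_pos n with rfl | hn
  · -- trivial case n = 0
    have hz : (α • (1 : Matrix (Fin 0) (Fin 0) ℝ) - (h * βd) • G₁)⁻¹
        * (αj • (1 : Matrix (Fin 0) (Fin 0) ℝ) - (h * βj) • G₂)
        - (α⁻¹ * αj) • (1 : Matrix (Fin 0) (Fin 0) ℝ) = 0 := by
      ext i j; exact i.elim0
    rw [hz, norm_zero]
    have : (0:ℝ) ≤ αmin⁻¹ := by positivity
    nlinarith [mul_nonneg (mul_nonneg (mul_nonneg (mul_nonneg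
      (mul_nonneg (by norm_num : (0:ℝ) ≤ 4) (sq_nonneg αmin⁻¹)) hαmax0.le) hβ0) hCG0) hh.le]
  haveI : Nonempty (Fin n) := ⟨⟨0, hn⟩⟩
  have hkey : h * (βmax * CG) < αmin / 2 := by
    have h1 : h * (2 * βmax * CG) < αmin := (lt_div_iff₀ (by nlinarith)).mp hsmall
    nlinarith
  set t : Matrix (Fin n) (Fin n) ℝ := (h * βd / α) • G₁ with ht_def
  have ht : ‖t‖ ≤ h * βmax / αmin * CG := by
    rw [ht_def, norm_smul, Real.norm_eq_abs]
    have h1 : |h * βd / α| ≤ h * βmax / αmin := by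
      rw [abs_div, abs_mul, abs_of_pos hh]
      exact div_le_div₀ (by positivity) (by nlinarith) hαmin hα
    exact mul_le_mul h1 hG₁ (norm_nonneg _) (by positivity)
  have ht2 : ‖t‖ ≤ 1 / 2 := by
    refine le_trans ht ?_
    rw [div_mul_eq_mul_div, div_le_div_iff₀ hαmin (by norm_num)]
    nlinarith
  have ht1 : ‖t‖ < 1 := lt_of_le_of_lt ht2 (by norm_num)
  set S : Matrix (Fin n) (Fin n) ℝ := ∑' k : ℕ, t ^ k with hS_def
  have hS : ‖S‖ ≤ 2 := by
    have h1 : ‖S‖ ≤ ‖(1 : Matrix (Fin n) (Fin n) ℝ)‖ - 1 + (1 - ‖t‖)⁻¹ :=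
      tsum_geometric_le_of_norm_lt_one t ht1
    rw [norm_one] at h1
    have h2 : (1 - ‖t‖)⁻¹ ≤ (1/2 : ℝ)⁻¹ := by
      apply inv_anti₀ (by norm_num)
      linarith
    norm_num at h2 ⊢
    linarith
  set u : (Matrix (Fin n) (Fin n) ℝ)ˣ := Units.oneSub t ht1 with hu_def
  have huval : (u : Matrix (Fin n) (Fin n) ℝ) = 1 - t := rfl
  have hdet1t : IsUnit ((1 : Matrix (Fin n) (Fin n) ℝ) - t).det := by
    rw [← huval]; exact (Matrix.isUnit_iff_isUnit_det _).mp u.isUnit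
  have huinv : ((1 : Matrix (Fin n) (Fin n) ℝ) - t)⁻¹ = S := by
    rw [← huval, ← Matrix.coe_units_inv]; rfl
  set M : Matrix (Fin n) (Fin n) ℝ := α • (1 : Matrix (Fin n) (Fin n) ℝ) - (h * βd) • G₁
    with hM_def
  have hM : α • ((1 : Matrix (Fin n) (Fin n) ℝ) - t) = M := by
    rw [hM_def, smul_sub, ht_def, smul_smul]
    have : α * (h * βd / α) = h * βd := by field_simp
    rw [this]
  have hMinv : M⁻¹ = α⁻¹ • S := by
    haveI := invertibleOfNonzero hα0
    rw [← hM, Matrix.inv_smul (1 - t) α hdet1t, invOf_eq_inv, huinv]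
  have hdetM : IsUnit M.det := by
    rw [← hM, Matrix.det_smul]
    exact ((isUnit_iff_ne_zero).2 (pow_ne_zero _ hα0)).mul hdet1t
  set N : Matrix (Fin n) (Fin n) ℝ := αj • (1 : Matrix (Fin n) (Fin n) ℝ) - (h * βj) • G₂
    with hN_def
  have key : N - (α⁻¹ * αj) • M
      = (α⁻¹ * αj * (h * βd)) • G₁ - (h * βj) • G₂ := by
    rw [hM_def, hN_def, smul_sub, smul_smul, smul_smul]
    have e1 : α⁻¹ * αj * α = αj := by
      rw [mul_comm α⁻¹ αj, mul_assoc, inv_mul_cancel₀ hα0, mul_one]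
    rw [e1]
    abel
  clear_value t S u M N
  have hfact : M⁻¹ * N - (α⁻¹ * αj) • (1 : Matrix (Fin n) (Fin n) ℝ)
      = M⁻¹ * (N - (α⁻¹ * αj) • M) := by
    rw [mul_sub, Matrix.mul_smul, Matrix.nonsing_inv_mul M hdetM]
  rw [hfact, key]
  have A1 : ‖M⁻¹ * ((α⁻¹ * αj * (h * βd)) • G₁ - (h * βj) • G₂)‖
      ≤ ‖M⁻¹‖ * ‖(α⁻¹ * αj * (h * βd)) • G₁ - (h * βj) • G₂‖ := norm_mul_le _ _
  have A2 : ‖M⁻¹‖ ≤ αmin⁻¹ * 2 := by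
    rw [hMinv, norm_smul, Real.norm_eq_abs, abs_inv]
    have h1 : |α|⁻¹ ≤ αmin⁻¹ := inv_anti₀ hαmin hα
    exact mul_le_mul h1 hS (norm_nonneg _) (by positivity)
  have A3 : ‖(α⁻¹ * αj * (h * βd)) • G₁ - (h * βj) • G₂‖
      ≤ αmin⁻¹ * αmax * (h * βmax * CG) + h * βmax * CG := by
    refine le_trans (norm_sub_le _ _) ?_
    rw [norm_smul, norm_smul, Real.norm_eq_abs, Real.norm_eq_abs]
    have h1 : |α⁻¹ * αj * (h * βd)| ≤ αmin⁻¹ * αmax * (h * βmax) := by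
      rw [abs_mul, abs_mul, abs_mul, abs_inv, abs_of_pos hh]
      have hi : |α|⁻¹ ≤ αmin⁻¹ := inv_anti₀ hαmin hα
      have hi0 : (0:ℝ) ≤ |α|⁻¹ := by positivity
      have e2 := mul_le_mul hi hαj (abs_nonneg _) (by positivity)
      exact mul_le_mul e2 (mul_le_mul_of_nonneg_left hβd hh.le)
        (by positivity) (mul_nonneg (by positivity) hαmax0.le)
    have h2 : |h * βj| ≤ h * βmax := by
      rw [abs_mul, abs_of_pos hh]
      exact mul_le_mul_of_nonneg_left hβj hh.le
    have b1 := mul_le_mul h1 hG₁ (norm_nonneg _) (by positivity)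
    have b2 := mul_le_mul h2 hG₂ (norm_nonneg _) (by positivity)
    nlinarith
  have hm1 : 1 ≤ αmin⁻¹ * αmax := by
    rw [← inv_mul_cancel₀ (ne_of_gt hαmin)]
    exact mul_le_mul_of_nonneg_left (le_trans hα hα') (by positivity)
  have hp0 : (0:ℝ) ≤ h * βmax * CG := by positivity
  have hi0 : (0:ℝ) < αmin⁻¹ := by positivity
  calc ‖M⁻¹ * ((α⁻¹ * αj * (h * βd)) • G₁ - (h * βj) • G₂)‖
      ≤ ‖M⁻¹‖ * ‖(α⁻¹ * αj * (h * βd)) • G₁ - (h * βj) • G₂‖ := A1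
    _ ≤ (αmin⁻¹ * 2) * (αmin⁻¹ * αmax * (h * βmax * CG) + h * βmax * CG) :=
        mul_le_mul A2 A3 (norm_nonneg _) (by positivity)
    _ ≤ 4 * αmin⁻¹ ^ 2 * αmax * βmax * CG * h := by
        nlinarith [mul_nonneg hp0 (sub_nonneg.mpr hm1), mul_nonneg hi0.le
          (mul_nonneg hp0 (sub_nonneg.mpr hm1))]
end

section
/- Sylvester operator injectivity from spectral disjointness: if A ∈ Matrix (Fin n) (Fin n) ℂ and B ∈ Matrix (Fin m) (Fin m) ℂ have disjoint spectra, then the map P ↦ P A − B P on Matrix (Fin m) (Fin n) ℂ is injective; equivalently, sep_F(A,B) > 0. -/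
attribute [local instance] Matrix.frobeniusNormedAddCommGroup

attribute [local instance] Matrix.frobeniusNormedSpace

open Polynomial in
lemma stmt_16_root_mem_spectrum {m : ℕ} (B : Matrix (Fin m) (Fin m) ℂ) (μ : ℂ)
    (h : Polynomial.eval μ B.charpoly = 0) : μ ∈ spectrum ℂ B := by
  rw [Matrix.charpoly, ← Polynomial.coe_evalRingHom, RingHom.map_det] at h
  have hdet : Matrix.det (Matrix.scalar (Fin m) μ - B) = 0 := by
    rw [← h]; congr 1; ext i j
    by_cases hij : i = j <;>
      simp [Matrix.charmatrix_apply, Matrix.map_apply, hij, Matrix.diagonal_apply]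
  rw [spectrum.mem_iff]
  intro hu
  rw [Matrix.isUnit_iff_isUnit_det] at hu
  have he : (algebraMap ℂ (Matrix (Fin m) (Fin m) ℂ)) μ - B = Matrix.scalar (Fin m) μ - B := rfl
  rw [he, hdet] at hu
  exact hu.ne_zero rfl

open Polynomial in
lemma stmt_16_intertwine {n m : ℕ} (A : Matrix (Fin n) (Fin n) ℂ) (B : Matrix (Fin m) (Fin m) ℂ)
    (P : Matrix (Fin m) (Fin n) ℂ) (h : P * A = B * P) (p : ℂ[X]) :
    P * (aeval A p) = (aeval B p) * P := by
  have hpow : ∀ k : ℕ, P * A ^ k = B ^ k * P := by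
    intro k
    induction k with
    | zero => simp
    | succ k ih =>
      rw [pow_succ, pow_succ, ← Matrix.mul_assoc, ih, Matrix.mul_assoc, h, ← Matrix.mul_assoc]
  induction p using Polynomial.induction_on' with
  | add p q hp hq => rw [map_add, map_add, Matrix.mul_add, Matrix.add_mul, hp, hq]
  | monomial k c =>
    rw [aeval_monomial, aeval_monomial, Algebra.algebraMap_eq_smul_one,
      Algebra.algebraMap_eq_smul_one, smul_mul_assoc, smul_mul_assoc, one_mul, one_mul,
      Matrix.mul_smul, hpow, Matrix.smul_mul]

open Polynomial in
lemma stmt_16_inj {n m : ℕ} (hn : 0 < n) (hm : 0 < m)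
    (A : Matrix (Fin n) (Fin n) ℂ) (B : Matrix (Fin m) (Fin m) ℂ)
    (hdisj : spectrum ℂ A ∩ spectrum ℂ B = ∅) :
    Function.Injective (fun P : Matrix (Fin m) (Fin n) ℂ => P * A - B * P) := by
  haveI : Nonempty (Fin n) := ⟨⟨0, hn⟩⟩
  haveI : Nonempty (Fin m) := ⟨⟨0, hm⟩⟩
  -- the key matrix M = charpoly B evaluated at A is invertible
  set M := aeval A B.charpoly with hM
  have hMunit : IsUnit M := by
    rw [← spectrum.zero_notMem_iff ℂ]
    intro h0
    have hdeg : 0 < B.charpoly.degree := by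
      rw [Matrix.charpoly_degree_eq_dim]
      exact_mod_cast Fintype.card_pos
    rw [hM, spectrum.map_polynomial_aeval_of_degree_pos A B.charpoly hdeg] at h0
    obtain ⟨μ, hμA, hμ0⟩ := h0
    have hμB : μ ∈ spectrum ℂ B := stmt_16_root_mem_spectrum B μ hμ0
    exact Set.eq_empty_iff_forall_notMem.mp hdisj μ ⟨hμA, hμB⟩
  intro P Q hPQ
  simp only at hPQ
  have hD : (P - Q) * A = B * (P - Q) := by
    rw [Matrix.sub_mul, Matrix.mul_sub]
    exact sub_eq_sub_iff_sub_eq_sub.mp hPQ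
  have hkey : (P - Q) * M = 0 := by
    rw [hM, stmt_16_intertwine A B (P - Q) hD, Matrix.aeval_self_charpoly, Matrix.zero_mul]
  have hdet : IsUnit M.det := (Matrix.isUnit_iff_isUnit_det M).mp hMunit
  have : P - Q = (P - Q) * M * M⁻¹ := by
    rw [Matrix.mul_assoc, Matrix.mul_nonsing_inv M hdet, Matrix.mul_one]
  rw [hkey, Matrix.zero_mul] at this
  exact sub_eq_zero.mp this

/-- Sylvester operator injectivity from spectral disjointness: if `A` and `B` have no
common eigenvalue, the map `P ↦ PA − BP` is injective; equivalently `sep_F(A,B) > 0`. -/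
theorem stmt_16 {n m : ℕ} (hn : 0 < n) (hm : 0 < m)
    (A : Matrix (Fin n) (Fin n) ℂ) (B : Matrix (Fin m) (Fin m) ℂ)
    (hdisj : spectrum ℂ A ∩ spectrum ℂ B = ∅) :
    Function.Injective (fun P : Matrix (Fin m) (Fin n) ℂ => P * A - B * P) ∧
    0 < sInf {x : ℝ | ∃ P : Matrix (Fin m) (Fin n) ℂ, ‖P‖ = 1 ∧
        x = ‖P * A - B * P‖} := by
  have hinj := stmt_16_inj hn hm A B hdisj
  refine ⟨hinj, ?_⟩
  haveI : Nonempty (Fin n) := ⟨⟨0, hn⟩⟩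
  haveI : Nonempty (Fin m) := ⟨⟨0, hm⟩⟩
  haveI : Nontrivial (Matrix (Fin m) (Fin n) ℂ) := by infer_instance
  haveI : ProperSpace (Matrix (Fin m) (Fin n) ℂ) := FiniteDimensional.proper ℂ _
  let T : Matrix (Fin m) (Fin n) ℂ →ₗ[ℂ] Matrix (Fin m) (Fin n) ℂ :=
    { toFun := fun P => P * A - B * P
      map_add' := fun P Q => by
        show (P + Q) * A - B * (P + Q) = (P * A - B * P) + (Q * A - B * Q)
        rw [Matrix.add_mul, Matrix.mul_add]; abel
      map_smul' := fun c P => by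
        simp only [Matrix.smul_mul, Matrix.mul_smul, RingHom.id_apply, smul_sub] }
  have hTinj : Function.Injective T := hinj
  have hTc : Continuous T := T.continuous_of_finiteDimensional
  have hset : {x : ℝ | ∃ P : Matrix (Fin m) (Fin n) ℂ, ‖P‖ = 1 ∧ x = ‖P * A - B * P‖}
      = (fun P => ‖T P‖) '' Metric.sphere (0 : Matrix (Fin m) (Fin n) ℂ) 1 := by
    ext x
    simp only [Set.mem_setOf_eq, Set.mem_image, Metric.mem_sphere, dist_zero_right]
    exact ⟨fun ⟨P, h1, h2⟩ => ⟨P, h1, h2.symm⟩, fun ⟨P, h1, h2⟩ => ⟨P, h1, h2.symm⟩⟩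
  rw [hset]
  have hcpt : IsCompact ((fun P => ‖T P‖) '' Metric.sphere (0 : Matrix (Fin m) (Fin n) ℂ) 1) :=
    (isCompact_sphere 0 1).image (hTc.norm)
  have hne : ((fun P => ‖T P‖) '' Metric.sphere (0 : Matrix (Fin m) (Fin n) ℂ) 1).Nonempty :=
    Set.Nonempty.image _ (NormedSpace.sphere_nonempty.mpr zero_le_one)
  obtain ⟨P, hP, hPE⟩ := hcpt.sInf_mem hne
  rw [← hPE]
  have hP0 : P ≠ 0 := by
    intro h0
    rw [h0] at hP
    simp at hP
  have : T P ≠ 0 := fun h => hP0 (hTinj (by rw [h, map_zero]))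
  exact norm_pos_iff.mpr this
end

section
/- Eigenvalue perturbation via a Bauer–Fike-type bound for diagonalizable matrices: if A = V D V⁻¹ with D diagonal, and μ is an eigenvalue of A + E, then there exists a diagonal entry λ of D with |μ − λ| ≤ κ(V)·‖E‖, where κ(V) = ‖V‖·‖V⁻¹‖ in the operator norm. -/
/-!
Conjugating by `V` turns `A + E - μ • 1` into `diagonal (λ - μ) + V⁻¹ * E * V`, which is still
singular. For a null vector `x` of it, `‖diagonal (λ - μ) *ᵥ x‖ = ‖(V⁻¹ * E * V) *ᵥ x‖`; the left
side is at least `minᵢ ‖λᵢ - μ‖ * ‖x‖` and the right side at most `‖V‖ * ‖V⁻¹‖ * ‖E‖ * ‖x‖`.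
-/

open scoped Matrix.Norms.L2Operator

namespace Matrix

variable {ι 𝕜 : Type*} [Fintype ι] [DecidableEq ι] [RCLike 𝕜]

theorem mul_norm_le_norm_diagonal_mulVec {d : ι → 𝕜} {c : ℝ} (hc : 0 ≤ c) (hd : ∀ i, c ≤ ‖d i‖)
    (x : EuclideanSpace 𝕜 ι) :
    c * ‖x‖ ≤ ‖(EuclideanSpace.equiv ι 𝕜).symm (diagonal d *ᵥ x)‖ := by
  refine le_of_sq_le_sq ?_ (norm_nonneg _)
  rw [mul_pow, EuclideanSpace.norm_sq_eq, EuclideanSpace.norm_sq_eq, Finset.mul_sum]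
  refine Finset.sum_le_sum fun i _ => ?_
  change _ ≤ ‖(diagonal d *ᵥ x) i‖ ^ 2
  rw [mulVec_diagonal, norm_mul, mul_pow]
  gcongr
  exact hd i

theorem exists_norm_le_of_det_diagonal_add_eq_zero {d : ι → 𝕜} {B : Matrix ι ι 𝕜}
    (h : (diagonal d + B).det = 0) : ∃ i, ‖d i‖ ≤ ‖B‖ := by
  obtain ⟨x, hx0, hx⟩ := exists_mulVec_eq_zero_iff.mpr h
  have : Nonempty ι := by
    by_contra hι
    exact hx0 (funext fun i => (hι ⟨i⟩).elim)
  obtain ⟨i, hi⟩ := Finite.exists_min fun j => ‖d j‖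
  refine ⟨i, ?_⟩
  set xe := (EuclideanSpace.equiv ι 𝕜).symm x
  have hxe : 0 < ‖xe‖ := by simpa [xe] using hx0
  have hdiag : diagonal d *ᵥ x = -(B *ᵥ x) := by
    rw [add_mulVec] at hx
    exact eq_neg_of_add_eq_zero_left hx
  refine le_of_mul_le_mul_right ?_ hxe
  calc ‖d i‖ * ‖xe‖ ≤ ‖(EuclideanSpace.equiv ι 𝕜).symm (diagonal d *ᵥ x)‖ :=
        mul_norm_le_norm_diagonal_mulVec (norm_nonneg _) hi xe
    _ = ‖(EuclideanSpace.equiv ι 𝕜).symm (B *ᵥ x)‖ := by rw [hdiag, map_neg, norm_neg]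
    _ ≤ ‖B‖ * ‖xe‖ := l2_opNorm_mulVec B xe

end Matrix

/-- Bauer–Fike-type bound for diagonalizable matrices: if `A = V D V⁻¹` with `D`
diagonal and `μ` is an eigenvalue of `A + E`, then some diagonal entry `λᵢ` of `D`
satisfies `|μ − λᵢ| ≤ ‖V‖·‖V⁻¹‖·‖E‖` (operator norm). -/
theorem stmt_17 {n : ℕ} (A E V : Matrix (Fin n) (Fin n) ℂ) (dvec : Fin n → ℂ)
    (hV : IsUnit V) (hA : A = V * Matrix.diagonal dvec * V⁻¹)
    (μ : ℂ) (hμ : (A + E - μ • (1 : Matrix (Fin n) (Fin n) ℂ)).det = 0) :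
    ∃ i : Fin n, ‖μ - dvec i‖ ≤ ‖V‖ * ‖V⁻¹‖ * ‖E‖ := by
  have hconj : V⁻¹ * (A + E - μ • 1) * V =
      Matrix.diagonal (fun i => dvec i - μ) + V⁻¹ * E * V := by
    have hVinv : V⁻¹ * V = 1 := V.nonsing_inv_mul ((V.isUnit_iff_isUnit_det).mp hV)
    rw [← Matrix.diagonal_sub, ← Matrix.smul_one_eq_diagonal, hA]
    simp only [Matrix.mul_add, Matrix.add_mul, Matrix.mul_sub, Matrix.sub_mul, Matrix.mul_smul,
      Matrix.smul_mul, Matrix.mul_one, Matrix.mul_assoc, hVinv]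
    rw [← Matrix.mul_assoc V⁻¹ V, hVinv, Matrix.one_mul]
    abel
  obtain ⟨i, hi⟩ := Matrix.exists_norm_le_of_det_diagonal_add_eq_zero (B := V⁻¹ * E * V)
    (d := fun i => dvec i - μ) (by rw [← hconj, Matrix.det_conj' hV, hμ])
  refine ⟨i, ?_⟩
  calc ‖μ - dvec i‖ = ‖dvec i - μ‖ := norm_sub_rev _ _
    _ ≤ ‖V⁻¹ * E * V‖ := hi
    _ ≤ ‖V⁻¹‖ * ‖E‖ * ‖V‖ := norm_mul₃_le
    _ = ‖V‖ * ‖V⁻¹‖ * ‖E‖ := by ring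
end
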